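/- Let X₁ and X₂ be degree-similar finite simple graphs on n vertices, and let Y₁ and Y₂ be degree-similar finite simple graphs on m vertices with Y₁ connected. Then the lexicographic products X₁ ⊙ Y₁ and X₂ ⊙ Y₂ are degree similar. -/

import Mathlib

open Matrix

open Classical in
noncomputable def adjMat {V : Type*} (G : SimpleGraph V) : Matrix V V ℝ :=
  Matrix.of fun a b => if G.Adj a b then 1 else 0

noncomputable def gdeg {V : Type*} (G : SimpleGraph V) (v : V) : ℕ :=
  Nat.card (G.neighborSet v)

noncomputable def degMat {V : Type*} [DecidableEq V] (G : SimpleGraph V) : Matrix V V ℝ :=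
  Matrix.diagonal fun v => (gdeg G v : ℝ)

/-- Two graphs (on possibly different vertex types of the same cardinality) are
degree similar if there is an invertible real matrix conjugating the adjacency
matrix of the first to that of the second, and likewise for the degree matrices. -/
def DegreeSimilar {V W : Type*} [Fintype V] [Fintype W] [DecidableEq V] [DecidableEq W]
    (G : SimpleGraph V) (H : SimpleGraph W) : Prop :=
  ∃ (e : V ≃ W) (M : Matrix V V ℝ), IsUnit M ∧
    M⁻¹ * adjMat G * M = (adjMat H).submatrix ⇑e ⇑e ∧
    M⁻¹ * degMat G * M = (degMat H).submatrix ⇑e ⇑e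

/-- The Cartesian product of graphs. -/
def cartProd {V W : Type*} (G : SimpleGraph V) (H : SimpleGraph W) :
    SimpleGraph (V × W) :=
  SimpleGraph.fromRel fun a b =>
    (a.1 = b.1 ∧ H.Adj a.2 b.2) ∨ (a.2 = b.2 ∧ G.Adj a.1 b.1)

/-- The tensor product of graphs. -/
def tensorProd {V W : Type*} (G : SimpleGraph V) (H : SimpleGraph W) :
    SimpleGraph (V × W) :=
  SimpleGraph.fromRel fun a b => G.Adj a.1 b.1 ∧ H.Adj a.2 b.2

/-- The strong product of graphs. -/
def strongProd {V W : Type*} (G : SimpleGraph V) (H : SimpleGraph W) :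
    SimpleGraph (V × W) :=
  SimpleGraph.fromRel fun a b =>
    (a.1 = b.1 ∧ H.Adj a.2 b.2) ∨ (a.2 = b.2 ∧ G.Adj a.1 b.1) ∨
      (G.Adj a.1 b.1 ∧ H.Adj a.2 b.2)

/-- The lexicographic product of graphs. -/
def lexProd {V W : Type*} (G : SimpleGraph V) (H : SimpleGraph W) :
    SimpleGraph (V × W) :=
  SimpleGraph.fromRel fun a b =>
    G.Adj a.1 b.1 ∨ (a.1 = b.1 ∧ H.Adj a.2 b.2)

/-!
With `J` the all-ones matrix and `m` the number of vertices of `Y`,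
`A(X ⊙ Y) = A(X) ⊗ J + I ⊗ A(Y)` and `D(X ⊙ Y) = D(X) ⊗ mI + I ⊗ D(Y)`.
So if `M` and `N` realise the degree similarities of the factors, `M ⊗ N` realises that of the
products as soon as `N` commutes with `J`.
Now `N` conjugates the Laplacian of `Y₁` to that of `Y₂`; the two kernels have equal dimension,
which is the number of connected components, so `Y₂` is connected as well and both kernels consist
of the constant vectors. Hence `N` and `Nᵀ` fix the line of the all-ones vector, with the same
eigenvalue, which says exactly that `N` commutes with `J`.
-/

open Kronecker

section LinearAlgebra

def allOnes (n R : Type*) [One R] : Matrix n n R :=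
  Matrix.of fun _ _ => 1

variable {n : Type*} [Fintype n]

theorem SemiconjBy.kronecker {R : Type*} [CommSemiring R] {m : Type*} [Fintype m]
    {M A B : Matrix n n R} {N C D : Matrix m m R} (h₁ : SemiconjBy M A B)
    (h₂ : SemiconjBy N C D) : SemiconjBy (M ⊗ₖ N) (A ⊗ₖ C) (B ⊗ₖ D) := by
  rw [SemiconjBy, ← mul_kronecker_mul, ← mul_kronecker_mul, h₁.eq, h₂.eq]

theorem inv_mul_mul_eq_iff_semiconjBy [DecidableEq n] {R : Type*} [CommRing R]
    {M A B : Matrix n n R} (hM : IsUnit M) : M⁻¹ * A * M = B ↔ SemiconjBy M B A := by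
  have := hM.invertible
  rw [SemiconjBy, Matrix.mul_assoc, inv_mul_eq_iff_eq_mul_of_invertible, eq_comm]

theorem finrank_ker_toLin'_eq_of_semiconjBy [DecidableEq n] {K : Type*} [Field K]
    {A B N : Matrix n n K} (hN : IsUnit N) (h : SemiconjBy N B A) :
    Module.finrank K (LinearMap.ker (toLin' B)) = Module.finrank K (LinearMap.ker (toLin' A)) := by
  have hdet := (isUnit_iff_isUnit_det N).mp hN
  have hrank : B.rank = A.rank := by
    rw [← rank_mul_eq_right_of_isUnit_det N B hdet, h.eq, rank_mul_eq_left_of_isUnit_det N A hdet]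
  have hA := A.mulVecLin.finrank_range_add_finrank_ker
  have hB := B.mulVecLin.finrank_range_add_finrank_ker
  rw [rank, rank] at hrank
  rw [toLin'_apply', toLin'_apply']
  omega

theorem commute_allOnes_of_semiconjBy {K : Type*} [Field K] [CharZero K]
    {L₁ L₂ N : Matrix n n K} (h₁ : L₁.IsSymm) (h₂ : L₂.IsSymm)
    (hker₁ : ∀ x, L₁ *ᵥ x = 0 ↔ ∀ i j, x i = x j) (hker₂ : ∀ x, L₂ *ᵥ x = 0 ↔ ∀ i j, x i = x j)
    (hN : SemiconjBy N L₂ L₁) : Commute N (allOnes n K) := by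
  have hrow : ∀ i j, (N *ᵥ 1) i = (N *ᵥ 1) j := by
    rw [← hker₁, mulVec_mulVec, ← hN.eq, ← mulVec_mulVec, (hker₂ 1).2 fun _ _ => rfl,
      mulVec_zero]
  have hNT : SemiconjBy Nᵀ L₁ L₂ := by
    simpa [SemiconjBy, transpose_mul, h₁.eq, h₂.eq] using (congrArg transpose hN.eq).symm
  have hcol : ∀ i j, (Nᵀ *ᵥ 1) i = (Nᵀ *ᵥ 1) j := by
    rw [← hker₂, mulVec_mulVec, ← hNT.eq, ← mulVec_mulVec, (hker₁ 1).2 fun _ _ => rfl,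
      mulVec_zero]
  -- both vectors add up to the sum of all entries of `N`, so their constant values agree
  have hsum : ∑ i, (N *ᵥ 1) i = ∑ j, (Nᵀ *ᵥ 1) j := by
    simp only [mulVec, dotProduct, transpose_apply]
    exact Finset.sum_comm
  ext i j
  have : Nonempty n := ⟨i⟩
  have hcard : (Fintype.card n : K) ≠ 0 := Nat.cast_ne_zero.mpr Fintype.card_ne_zero
  have hij : (N *ᵥ 1) i = (Nᵀ *ᵥ 1) j := by
    simp only [Finset.sum_congr rfl fun k _ => hrow k i, Finset.sum_congr rfl fun k _ => hcol k j,
      Finset.sum_const, Finset.card_univ, nsmul_eq_mul] at hsum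
    exact mul_left_cancel₀ hcard hsum
  simpa [allOnes, mul_apply, mulVec, dotProduct] using hij

end LinearAlgebra

section GraphMatrices

variable {V W : Type*}

theorem adjMat_eq_adjMatrix (G : SimpleGraph V) [DecidableRel G.Adj] :
    adjMat G = G.adjMatrix ℝ := by
  ext a b
  by_cases h : G.Adj a b <;> simp [adjMat, h]

theorem gdeg_eq_degree [Fintype V] (G : SimpleGraph V) [DecidableRel G.Adj] (v : V) :
    gdeg G v = G.degree v := by
  rw [gdeg, Nat.card_eq_fintype_card, G.card_neighborSet_eq_degree]

theorem lapMatrix_eq_degMat_sub_adjMat [Fintype V] [DecidableEq V] (G : SimpleGraph V)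
    [DecidableRel G.Adj] : G.lapMatrix ℝ = degMat G - adjMat G := by
  simp only [SimpleGraph.lapMatrix, SimpleGraph.degMatrix, degMat, gdeg_eq_degree,
    adjMat_eq_adjMatrix]

theorem gdeg_eq_sum_adjMat [Fintype V] (G : SimpleGraph V) (v : V) :
    (gdeg G v : ℝ) = ∑ w, adjMat G v w := by
  classical
  rw [gdeg_eq_degree, G.degree_eq_sum_if_adj, adjMat_eq_adjMatrix]
  rfl

theorem adjMat_comap (f : V → W) (G : SimpleGraph W) :
    adjMat (G.comap f) = (adjMat G).submatrix f f := by
  ext a b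
  by_cases h : G.Adj (f a) (f b) <;> simp [adjMat, h]

theorem gdeg_comap (e : V ≃ W) (G : SimpleGraph W) (v : V) :
    gdeg (G.comap e) v = gdeg G (e v) :=
  Nat.card_congr (e.subtypeEquiv fun w => by simp)

theorem degMat_comap [DecidableEq V] [DecidableEq W] (e : V ≃ W) (G : SimpleGraph W) :
    degMat (G.comap e) = (degMat G).submatrix e e := by
  simp only [degMat, submatrix_diagonal_equiv, Function.comp_def, gdeg_comap]

end GraphMatrices

section LexProd

variable {V W : Type*}

theorem lexProd_adj (G : SimpleGraph V) (H : SimpleGraph W) (a b : V × W) :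
    (lexProd G H).Adj a b ↔ G.Adj a.1 b.1 ∨ (a.1 = b.1 ∧ H.Adj a.2 b.2) := by
  simp only [lexProd, SimpleGraph.fromRel_adj, ne_eq]
  constructor
  · rintro ⟨-, h | h⟩
    · exact h
    · exact h.imp (fun h => h.symm) fun ⟨h₁, h₂⟩ => ⟨h₁.symm, h₂.symm⟩
  · rintro (h | ⟨h₁, h₂⟩)
    · exact ⟨fun hab => G.ne_of_adj h (congrArg Prod.fst hab), Or.inl (Or.inl h)⟩
    · exact ⟨fun hab => H.ne_of_adj h₂ (congrArg Prod.snd hab), Or.inl (Or.inr ⟨h₁, h₂⟩)⟩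

theorem lexProd_comap {V' W' : Type*} {e : V → V'} (he : Function.Injective e) (f : W → W')
    (G : SimpleGraph V') (H : SimpleGraph W') :
    lexProd (G.comap e) (H.comap f) = (lexProd G H).comap (Prod.map e f) := by
  ext a b
  simp [lexProd_adj, he.eq_iff]

theorem adjMat_lexProd [DecidableEq V] (G : SimpleGraph V) (H : SimpleGraph W) :
    adjMat (lexProd G H) = adjMat G ⊗ₖ allOnes W ℝ + 1 ⊗ₖ adjMat H := by
  ext ⟨a, b⟩ ⟨c, d⟩
  by_cases h₁ : G.Adj a c
  · simp [adjMat, allOnes, lexProd_adj, h₁, G.ne_of_adj h₁]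
  · by_cases h₂ : a = c <;> by_cases h₃ : H.Adj b d <;>
      simp [adjMat, allOnes, one_apply, lexProd_adj, h₁, h₂, h₃]

theorem gdeg_lexProd [Fintype V] [Fintype W] (G : SimpleGraph V) (H : SimpleGraph W)
    (u : V) (v : W) :
    (gdeg (lexProd G H) (u, v) : ℝ) = gdeg G u * Fintype.card W + gdeg H v := by
  classical
  simp [gdeg_eq_sum_adjMat, adjMat_lexProd, Fintype.sum_prod_type, Finset.sum_add_distrib,
    allOnes, one_apply, Finset.sum_mul, mul_comm]

theorem degMat_lexProd [Fintype V] [Fintype W] [DecidableEq V] [DecidableEq W]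
    (G : SimpleGraph V) (H : SimpleGraph W) :
    degMat (lexProd G H) = degMat G ⊗ₖ (Fintype.card W : Matrix W W ℝ) + 1 ⊗ₖ degMat H := by
  rw [degMat, degMat, degMat, ← diagonal_natCast, ← diagonal_one, diagonal_kronecker_diagonal,
    diagonal_kronecker_diagonal, diagonal_add]
  congr 1
  ext ⟨u, v⟩
  simp [gdeg_lexProd]

end LexProd

section Connectivity

variable {V : Type*} [Fintype V] [DecidableEq V]

theorem lapMatrix_mulVec_eq_zero_iff_of_connected {G : SimpleGraph V} [DecidableRel G.Adj]
    (hG : G.Connected) {x : V → ℝ} : G.lapMatrix ℝ *ᵥ x = 0 ↔ ∀ i j, x i = x j := by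
  rw [G.lapMatrix_mulVec_eq_zero_iff_forall_reachable]
  exact forall₂_congr fun i j => ⟨fun h => h (hG.preconnected i j), fun h _ => h⟩

theorem semiconjBy_lapMatrix {G H : SimpleGraph V} [DecidableRel G.Adj] [DecidableRel H.Adj]
    {N : Matrix V V ℝ} (hA : SemiconjBy N (adjMat H) (adjMat G))
    (hD : SemiconjBy N (degMat H) (degMat G)) :
    SemiconjBy N (H.lapMatrix ℝ) (G.lapMatrix ℝ) := by
  rw [lapMatrix_eq_degMat_sub_adjMat, lapMatrix_eq_degMat_sub_adjMat]
  exact hD.sub_right hA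

theorem card_connectedComponent_eq_of_semiconjBy {G H : SimpleGraph V} [DecidableRel G.Adj]
    [DecidableRel H.Adj] {N : Matrix V V ℝ} (hN : IsUnit N)
    (h : SemiconjBy N (H.lapMatrix ℝ) (G.lapMatrix ℝ)) :
    Fintype.card H.ConnectedComponent = Fintype.card G.ConnectedComponent := by
  rw [SimpleGraph.card_connectedComponent_eq_finrank_ker_toLin'_lapMatrix,
    SimpleGraph.card_connectedComponent_eq_finrank_ker_toLin'_lapMatrix,
    finrank_ker_toLin'_eq_of_semiconjBy hN h]

theorem SimpleGraph.Connected.of_semiconjBy_lapMatrix {G H : SimpleGraph V} [DecidableRel G.Adj]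
    [DecidableRel H.Adj] {N : Matrix V V ℝ} (hG : G.Connected) (hN : IsUnit N)
    (h : SemiconjBy N (H.lapMatrix ℝ) (G.lapMatrix ℝ)) : H.Connected := by
  have : Subsingleton H.ConnectedComponent := by
    rw [← Fintype.card_le_one_iff_subsingleton, card_connectedComponent_eq_of_semiconjBy hN h,
      Fintype.card_le_one_iff_subsingleton]
    exact hG.preconnected.subsingleton_connectedComponent
  rw [SimpleGraph.connected_iff]
  exact ⟨fun v w => SimpleGraph.ConnectedComponent.eq.mp (Subsingleton.elim _ _), hG.nonempty⟩

theorem commute_allOnes_of_connected {G H : SimpleGraph V} (hG : G.Connected)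
    {N : Matrix V V ℝ} (hN : IsUnit N) (hA : SemiconjBy N (adjMat H) (adjMat G))
    (hD : SemiconjBy N (degMat H) (degMat G)) : Commute N (allOnes V ℝ) := by
  classical
  have hL := semiconjBy_lapMatrix hA hD
  have hH := hG.of_semiconjBy_lapMatrix hN hL
  exact commute_allOnes_of_semiconjBy (G.isSymm_lapMatrix ℝ) (H.isSymm_lapMatrix ℝ)
    (fun _ => lapMatrix_mulVec_eq_zero_iff_of_connected hG)
    (fun _ => lapMatrix_mulVec_eq_zero_iff_of_connected hH) hL

end Connectivity

section DegreeSimilarity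

variable {V W : Type*} [Fintype V] [Fintype W] [DecidableEq V] [DecidableEq W]

theorem degreeSimilar_iff_exists_semiconjBy {G : SimpleGraph V} {H : SimpleGraph W} :
    DegreeSimilar G H ↔ ∃ (e : V ≃ W) (M : Matrix V V ℝ), IsUnit M ∧
      SemiconjBy M (adjMat (H.comap e)) (adjMat G) ∧
      SemiconjBy M (degMat (H.comap e)) (degMat G) := by
  simp only [DegreeSimilar, adjMat_comap, degMat_comap]
  refine exists₂_congr fun e M => and_congr_right fun hM => ?_
  rw [inv_mul_mul_eq_iff_semiconjBy hM, inv_mul_mul_eq_iff_semiconjBy hM]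

variable {X₁ X₂ : SimpleGraph V} {Y₁ Y₂ : SimpleGraph W} {M : Matrix V V ℝ} {N : Matrix W W ℝ}

theorem semiconjBy_adjMat_lexProd (hX : SemiconjBy M (adjMat X₂) (adjMat X₁))
    (hY : SemiconjBy N (adjMat Y₂) (adjMat Y₁)) (hJ : Commute N (allOnes W ℝ)) :
    SemiconjBy (M ⊗ₖ N) (adjMat (lexProd X₂ Y₂)) (adjMat (lexProd X₁ Y₁)) := by
  rw [adjMat_lexProd, adjMat_lexProd]
  exact (hX.kronecker hJ).add_right ((Commute.one_right M).kronecker hY)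

theorem semiconjBy_degMat_lexProd (hX : SemiconjBy M (degMat X₂) (degMat X₁))
    (hY : SemiconjBy N (degMat Y₂) (degMat Y₁)) :
    SemiconjBy (M ⊗ₖ N) (degMat (lexProd X₂ Y₂)) (degMat (lexProd X₁ Y₁)) := by
  rw [degMat_lexProd, degMat_lexProd]
  exact (hX.kronecker (Nat.commute_cast N _)).add_right ((Commute.one_right M).kronecker hY)

end DegreeSimilarity

/-- Degree-similar factors give degree-similar lexicographic products. -/
theorem degreeSimilar_lexProd {V W : Type*} [Fintype V] [Fintype W]
    [DecidableEq V] [DecidableEq W]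
    (X₁ X₂ : SimpleGraph V) (Y₁ Y₂ : SimpleGraph W)
    (hX : DegreeSimilar X₁ X₂) (hY : DegreeSimilar Y₁ Y₂) (hY₁ : Y₁.Connected) :
    DegreeSimilar (lexProd X₁ Y₁) (lexProd X₂ Y₂) := by
  rw [degreeSimilar_iff_exists_semiconjBy] at hX hY ⊢
  obtain ⟨e, M, hM, hMA, hMD⟩ := hX
  obtain ⟨f, N, hN, hNA, hND⟩ := hY
  refine ⟨e.prodCongr f, M ⊗ₖ N, Matrix.IsUnit.kronecker hM hN, ?_⟩
  rw [show ⇑(e.prodCongr f) = Prod.map e f from rfl, ← lexProd_comap e.injective]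
  exact ⟨semiconjBy_adjMat_lexProd hMA hNA (commute_allOnes_of_connected hY₁ hN hNA hND),
    semiconjBy_degMat_lexProd hMD hND⟩
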